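/- For the complete graph K_{ab} on ab vertices with the homogeneous partition π into a cells of size b, and any positive integer j, the π-join M_j(A) is a DSRG with parameter set (ja²b + ab, jab + ab − 1, jb + ab − 1, jb + ab − 2, jb + b). -/

import Mathlib

open Matrix

/-- The all-ones matrix. -/
def onesMat (n : ℕ) : Matrix (Fin n) (Fin n) ℝ := Matrix.of fun _ _ => 1

/-- The all-ones matrix indexed by blocks. -/
def Jbig (N n : ℕ) : Matrix (Fin N × Fin n) (Fin N × Fin n) ℝ := Matrix.of fun _ _ => 1

/-- `Ublk a b i`: columns in the `i`-th cell are all-ones, other entries zero. -/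
def Ublk (a b : ℕ) (i : ℕ) : Matrix (Fin (a * b)) (Fin (a * b)) ℝ :=
  Matrix.of fun _ c => if (c : ℕ) / b = i then 1 else 0

/-- The π-join of `A` in power `j`: the block-circulant matrix of block order
`j*a+1` whose first block-row is `(A, U₁,…,U₁, U₂,…,U₂, …, U_a,…,U_a)`,
each `Uᵢ` repeated `j` times. -/
def Mjoin (a b j : ℕ) (A : Matrix (Fin (a * b)) (Fin (a * b)) ℝ) :
    Matrix (Fin (j * a + 1) × Fin (a * b)) (Fin (j * a + 1) × Fin (a * b)) ℝ :=
  fun p q =>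
    if q.1 - p.1 = 0 then A p.2 q.2
    else Ublk a b ((((q.1 - p.1 : Fin (j * a + 1)) : ℕ) - 1) / j) p.2 q.2

/-! The π-join `M_j(A)` is the block circulant matrix over `Fin (j * a + 1)` with blocks
`B 0 = A` and `B t = U_{⌊(t - 1) / j⌋}` for `t ≠ 0`, and a product of block circulants is the
block circulant of the convolution `t ↦ ∑ s, B s * C (t - s)`. For `A = J - I` every block
identity then follows from `J² = ab J`, `U_i J = b J`, `J U_i = ab U_i`, `U_i U_k = b U_k` and
`∑_{t ≠ 0} B t = j J`: the `a` cells partition the columns and each occurs `j` times in the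
first block row. -/

open Finset

section BlockCirculant

variable {G n R : Type*} [AddCommGroup G] [Fintype G] [Fintype n] [Semiring R]

variable (R) in
def blockCirculant : (G → Matrix n n R) →ₗ[R] Matrix (G × n) (G × n) R where
  toFun B := of fun p q => B (q.1 - p.1) p.2 q.2
  map_add' _ _ := rfl
  map_smul' _ _ := rfl

omit [Fintype G] [Fintype n] in
theorem blockCirculant_apply (B : G → Matrix n n R) (p q : G × n) :
    blockCirculant R B p q = B (q.1 - p.1) p.2 q.2 := rfl

theorem blockCirculant_mul (B C : G → Matrix n n R) :
    blockCirculant R B * blockCirculant R C =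
      blockCirculant R fun t => ∑ s, B s * C (t - s) := by
  ext ⟨p₁, p₂⟩ ⟨q₁, q₂⟩
  simp only [mul_apply, Fintype.sum_prod_type, blockCirculant_apply, Matrix.sum_apply]
  rw [← Equiv.sum_comp (Equiv.addRight p₁)]
  simp only [Equiv.coe_addRight, add_sub_cancel_right, sub_add_eq_sub_sub_swap]

omit [Fintype G] [Fintype n] in
theorem blockCirculant_single_one [DecidableEq G] [DecidableEq n] :
    blockCirculant R (Pi.single 0 1 : G → Matrix n n R) = 1 := by
  ext ⟨p₁, p₂⟩ ⟨q₁, q₂⟩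
  simp only [blockCirculant_apply, Pi.single_apply, sub_eq_zero, one_apply, Prod.mk.injEq]
  by_cases h : q₁ = p₁
  · simp [h, one_apply]
  · simp [h, Ne.symm h]

theorem sum_comp_sub_left {M : Type*} [AddCommMonoid M] (f : G → M) (t : G) :
    ∑ s, f (t - s) = ∑ s, f s :=
  (Equiv.subLeft t).sum_comp f

end BlockCirculant

theorem card_filter_div_eq {m n i : ℕ} (hi : i < m) :
    #{x ∈ range (m * n) | x / n = i} = n := by
  rcases n.eq_zero_or_pos with rfl | hn
  · simp
  have hcell : i * n + n ≤ m * n := by simpa [add_one_mul] using Nat.mul_le_mul_right n hi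
  have : {x ∈ range (m * n) | x / n = i} = Ico (i * n) (i * n + n) := by
    ext x
    simp only [mem_filter, mem_range, mem_Ico, Nat.div_eq_iff hn]
    omega
  simp [this]

theorem sum_ite_div_eq_of_lt {m n i : ℕ} (hi : i < m) :
    ∑ x : Fin (m * n), (if (x : ℕ) / n = i then (1 : ℝ) else 0) = n := by
  rw [Fin.sum_univ_eq_sum_range (fun x => if x / n = i then (1 : ℝ) else 0), sum_boole,
    card_filter_div_eq hi]

theorem onesMat_mul_onesMat (n : ℕ) : onesMat n * onesMat n = (n : ℝ) • onesMat n := by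
  ext p q
  simp [onesMat, mul_apply]

section Cells

variable {a b : ℕ}

theorem val_div_lt (q : Fin (a * b)) : (q : ℕ) / b < a :=
  Nat.div_lt_of_lt_mul (mul_comm a b ▸ q.isLt)

theorem Ublk_mul_onesMat {i : ℕ} (hi : i < a) :
    Ublk a b i * onesMat (a * b) = (b : ℝ) • onesMat (a * b) := by
  ext p q
  simp [Ublk, onesMat, mul_apply, sum_ite_div_eq_of_lt hi]

theorem onesMat_mul_Ublk (i : ℕ) :
    onesMat (a * b) * Ublk a b i = ((a * b : ℕ) : ℝ) • Ublk a b i := by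
  ext p q
  simp [Ublk, onesMat, mul_apply]

theorem Ublk_mul_Ublk {i : ℕ} (hi : i < a) (k : ℕ) :
    Ublk a b i * Ublk a b k = (b : ℝ) • Ublk a b k := by
  ext p q
  simp [Ublk, mul_apply, sum_ite_div_eq_of_lt hi]

theorem sum_Ublk_div (j : ℕ) :
    ∑ s : Fin (j * a), Ublk a b ((s : ℕ) / j) = (j : ℝ) • onesMat (a * b) := by
  ext p q
  have hq := val_div_lt q
  simp only [Ublk, onesMat, Matrix.sum_apply, of_apply, Matrix.smul_apply, smul_eq_mul,
    mul_one]
  rw [Fin.sum_univ_eq_sum_range (fun s => if (q : ℕ) / b = s / j then (1 : ℝ) else 0),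
    sum_boole, mul_comm j a]
  simp_rw [eq_comm (a := (q : ℕ) / b), card_filter_div_eq hq]

end Cells

theorem Jbig_eq_blockCirculant (N n : ℕ) [NeZero N] :
    Jbig N n = blockCirculant ℝ fun _ : Fin N => onesMat n := rfl

def pijoinBlock (a b j : ℕ) (A : Matrix (Fin (a * b)) (Fin (a * b)) ℝ) (t : Fin (j * a + 1)) :
    Matrix (Fin (a * b)) (Fin (a * b)) ℝ :=
  if t = 0 then A else Ublk a b (((t : ℕ) - 1) / j)

section PiJoin

variable {a b j : ℕ}

theorem Mjoin_eq_blockCirculant (A : Matrix (Fin (a * b)) (Fin (a * b)) ℝ) :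
    Mjoin a b j A = blockCirculant ℝ (pijoinBlock a b j A) := by
  ext p q
  simp only [Mjoin, blockCirculant_apply, pijoinBlock]
  split_ifs <;> rfl

theorem sum_pijoinBlock (A : Matrix (Fin (a * b)) (Fin (a * b)) ℝ) :
    ∑ t, pijoinBlock a b j A t = A + (j : ℝ) • onesMat (a * b) := by
  rw [Fin.sum_univ_succ, ← sum_Ublk_div j]
  simp [pijoinBlock, Fin.succ_ne_zero]

theorem pijoinBlock_cell_lt {t : Fin (j * a + 1)} (ht : t ≠ 0) : ((t : ℕ) - 1) / j < a := by
  have := Fin.val_ne_zero_iff.mpr ht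
  exact Nat.div_lt_of_lt_mul (by omega)

theorem onesMat_mul_pijoinBlock (t : Fin (j * a + 1)) :
    onesMat (a * b) * pijoinBlock a b j (onesMat (a * b) - 1) t =
      ((a * b : ℕ) : ℝ) • pijoinBlock a b j (onesMat (a * b) - 1) t +
        if t = 0 then ((a * b : ℕ) : ℝ) • 1 - onesMat (a * b) else 0 := by
  by_cases ht : t = 0
  · simp only [pijoinBlock, if_pos ht, mul_sub, mul_one, onesMat_mul_onesMat]
    module
  · simp only [pijoinBlock, if_neg ht, onesMat_mul_Ublk, add_zero]

theorem pijoinBlock_mul_of_ne_zero {s : Fin (j * a + 1)} (hs : s ≠ 0) (r : Fin (j * a + 1)) :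
    pijoinBlock a b j (onesMat (a * b) - 1) s * pijoinBlock a b j (onesMat (a * b) - 1) r =
      (b : ℝ) • pijoinBlock a b j (onesMat (a * b) - 1) r +
        if r = 0 then (b : ℝ) • 1 - pijoinBlock a b j (onesMat (a * b) - 1) s else 0 := by
  have hcell := pijoinBlock_cell_lt hs
  by_cases hr : r = 0
  · simp only [pijoinBlock, if_pos hr, if_neg hs, mul_sub, mul_one, Ublk_mul_onesMat hcell]
    module
  · simp only [pijoinBlock, if_neg hr, if_neg hs, Ublk_mul_Ublk hcell, add_zero]

theorem sum_pijoinBlock_mul_pijoinBlock_sub (t : Fin (j * a + 1)) :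
    ∑ s, pijoinBlock a b j (onesMat (a * b) - 1) s *
        pijoinBlock a b j (onesMat (a * b) - 1) (t - s) =
      ((j : ℝ) * b + a * b - 1) • (Pi.single 0 1 : Fin (j * a + 1) → Matrix _ _ ℝ) t
        + ((j : ℝ) * b + a * b - 2) • pijoinBlock a b j (onesMat (a * b) - 1) t
        + ((j : ℝ) * b + b) • (onesMat (a * b)
          - (Pi.single 0 1 : Fin (j * a + 1) → Matrix _ _ ℝ) t
          - pijoinBlock a b j (onesMat (a * b) - 1) t) := by
  have hB₀ : pijoinBlock a b j (onesMat (a * b) - 1) 0 = onesMat (a * b) - 1 := if_pos rfl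
  have hshift : ∑ s ∈ {0}ᶜ, pijoinBlock a b j (onesMat (a * b) - 1) (t - s) =
      onesMat (a * b) - 1 + (j : ℝ) • onesMat (a * b)
        - pijoinBlock a b j (onesMat (a * b) - 1) t := by
    rw [← sum_pijoinBlock, ← sum_comp_sub_left _ t, Fintype.sum_eq_add_sum_compl 0, sub_zero,
      add_sub_cancel_left]
  rw [Fintype.sum_eq_add_sum_compl 0, sub_zero, hB₀, sub_mul, one_mul, onesMat_mul_pijoinBlock,
    sum_congr rfl fun s hs => pijoinBlock_mul_of_ne_zero (by simpa using hs) _, sum_add_distrib,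
    ← smul_sum, hshift]
  simp_rw [sub_eq_zero, sum_ite_eq, mem_compl, mem_singleton, ite_not]
  by_cases ht : t = 0
  · simp only [ht, if_true, hB₀, Pi.single_eq_same]
    push_cast
    module
  · simp only [ht, if_false, Pi.single_eq_of_ne ht]
    push_cast
    module

theorem Mjoin_apply_self (A : Matrix (Fin (a * b)) (Fin (a * b)) ℝ)
    (p : Fin (j * a + 1) × Fin (a * b)) :
    Mjoin a b j A p p = A p.2 p.2 := by
  simp [Mjoin]

theorem Mjoin_apply_eq_zero_or_eq_one {A : Matrix (Fin (a * b)) (Fin (a * b)) ℝ}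
    (hA : ∀ r c, A r c = 0 ∨ A r c = 1) (p q : Fin (j * a + 1) × Fin (a * b)) :
    Mjoin a b j A p q = 0 ∨ Mjoin a b j A p q = 1 := by
  unfold Mjoin
  split_ifs
  · exact hA _ _
  · simp only [Ublk, of_apply]
    split_ifs <;> simp

theorem Mjoin_onesMat_sub_one_mul_Jbig :
    Mjoin a b j (onesMat (a * b) - 1) * Jbig (j * a + 1) (a * b) =
      ((j : ℝ) * a * b + a * b - 1) • Jbig (j * a + 1) (a * b) := by
  rw [Mjoin_eq_blockCirculant, Jbig_eq_blockCirculant, blockCirculant_mul, ← map_smul]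
  congr 1
  funext t
  simp only [← sum_mul, sum_pijoinBlock, Pi.smul_apply, add_mul, sub_mul, one_mul,
    smul_mul_assoc, onesMat_mul_onesMat]
  push_cast
  module

theorem Jbig_mul_Mjoin_onesMat_sub_one :
    Jbig (j * a + 1) (a * b) * Mjoin a b j (onesMat (a * b) - 1) =
      ((j : ℝ) * a * b + a * b - 1) • Jbig (j * a + 1) (a * b) := by
  rw [Mjoin_eq_blockCirculant, Jbig_eq_blockCirculant, blockCirculant_mul, ← map_smul]
  congr 1
  funext t
  rw [← mul_sum, sum_comp_sub_left, sum_pijoinBlock]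
  simp only [Pi.smul_apply, mul_add, mul_sub, mul_one, mul_smul_comm, onesMat_mul_onesMat]
  push_cast
  module

theorem Mjoin_onesMat_sub_one_mul_self :
    Mjoin a b j (onesMat (a * b) - 1) * Mjoin a b j (onesMat (a * b) - 1)
      = ((j : ℝ) * b + a * b - 1) • (1 : Matrix (Fin (j * a + 1) × Fin (a * b)) _ ℝ)
        + ((j : ℝ) * b + a * b - 2) • Mjoin a b j (onesMat (a * b) - 1)
        + ((j : ℝ) * b + b) •
          (Jbig (j * a + 1) (a * b) - 1 - Mjoin a b j (onesMat (a * b) - 1)) := by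
  rw [Mjoin_eq_blockCirculant, Jbig_eq_blockCirculant, ← blockCirculant_single_one,
    blockCirculant_mul]
  simp only [← map_add, ← map_sub, ← map_smul]
  congr 1
  funext t
  exact sum_pijoinBlock_mul_pijoinBlock_sub t

end PiJoin

theorem pijoin_complete_graph_general (a b j : ℕ) :
    Fintype.card (Fin (j * a + 1) × Fin (a * b)) = j * a ^ 2 * b + a * b ∧
    (∀ p q, Mjoin a b j (onesMat (a * b) - 1) p q = 0 ∨
            Mjoin a b j (onesMat (a * b) - 1) p q = 1) ∧
    (∀ p, Mjoin a b j (onesMat (a * b) - 1) p p = 0) ∧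
    Mjoin a b j (onesMat (a * b) - 1) * Jbig (j * a + 1) (a * b)
      = ((j : ℝ) * a * b + (a : ℝ) * b - 1) • Jbig (j * a + 1) (a * b) ∧
    Jbig (j * a + 1) (a * b) * Mjoin a b j (onesMat (a * b) - 1)
      = ((j : ℝ) * a * b + (a : ℝ) * b - 1) • Jbig (j * a + 1) (a * b) ∧
    Mjoin a b j (onesMat (a * b) - 1) * Mjoin a b j (onesMat (a * b) - 1)
      = ((j : ℝ) * b + (a : ℝ) * b - 1) • (1 : Matrix (Fin (j * a + 1) × Fin (a * b))
            (Fin (j * a + 1) × Fin (a * b)) ℝ)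
        + ((j : ℝ) * b + (a : ℝ) * b - 2) • Mjoin a b j (onesMat (a * b) - 1)
        + ((j : ℝ) * b + (b : ℝ)) • (Jbig (j * a + 1) (a * b) - 1
            - Mjoin a b j (onesMat (a * b) - 1)) := by
  refine ⟨?_, fun p q => Mjoin_apply_eq_zero_or_eq_one (fun r c => ?_) p q, fun p => ?_,
    Mjoin_onesMat_sub_one_mul_Jbig, Jbig_mul_Mjoin_onesMat_sub_one,
    Mjoin_onesMat_sub_one_mul_self⟩
  · simp only [Fintype.card_prod, Fintype.card_fin]
    ring
  · by_cases h : r = c <;> simp [onesMat, one_apply, h]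
  · simp [Mjoin_apply_self, onesMat]

/-- π-join of the complete graph `K_{ab}` (adjacency matrix `J − I`) with the
homogeneous partition into `a` cells of size `b`: for any positive integer `j`
the π-join `M_j(J−I)` is a DSRG with parameter set
`(ja²b + ab, jab + ab − 1, jb + ab − 1, jb + ab − 2, jb + b)`. -/
theorem pijoin_complete_graph (a b j : ℕ) (ha : 0 < a) (hb : 0 < b) (hj : 0 < j) :
    Fintype.card (Fin (j * a + 1) × Fin (a * b)) = j * a ^ 2 * b + a * b ∧
    (∀ p q, Mjoin a b j (onesMat (a * b) - 1) p q = 0 ∨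
            Mjoin a b j (onesMat (a * b) - 1) p q = 1) ∧
    (∀ p, Mjoin a b j (onesMat (a * b) - 1) p p = 0) ∧
    Mjoin a b j (onesMat (a * b) - 1) * Jbig (j * a + 1) (a * b)
      = ((j : ℝ) * a * b + (a : ℝ) * b - 1) • Jbig (j * a + 1) (a * b) ∧
    Jbig (j * a + 1) (a * b) * Mjoin a b j (onesMat (a * b) - 1)
      = ((j : ℝ) * a * b + (a : ℝ) * b - 1) • Jbig (j * a + 1) (a * b) ∧
    Mjoin a b j (onesMat (a * b) - 1) * Mjoin a b j (onesMat (a * b) - 1)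
      = ((j : ℝ) * b + (a : ℝ) * b - 1) • (1 : Matrix (Fin (j * a + 1) × Fin (a * b))
            (Fin (j * a + 1) × Fin (a * b)) ℝ)
        + ((j : ℝ) * b + (a : ℝ) * b - 2) • Mjoin a b j (onesMat (a * b) - 1)
        + ((j : ℝ) * b + (b : ℝ)) • (Jbig (j * a + 1) (a * b) - 1
            - Mjoin a b j (onesMat (a * b) - 1)) :=
  pijoin_complete_graph_general a b j
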